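/- Let R be the unique C¹ function with R(0) = R_init ≥ 0 and R'(t) = ζεV(t) + ∫₀^∞ [γ_A(θ)ξ(θ)a(t,θ) + γ_I(θ)i(t,θ)] dθ − μR(t). If N0 := S0 + V0 + ∫₀^∞ e0 + ∫₀^∞ a0 + ∫₀^∞ i0 + R_init, then the total population N(t) := S(t) + V(t) + ∫₀^∞ e(t,θ) dθ + ∫₀^∞ a(t,θ) dθ + ∫₀^∞ i(t,θ) dθ + R(t) satisfies N(t) = N0 for all t ≥ 0. -/

import Mathlib

open MeasureTheory Filter

noncomputable section

/-- Survival kernel of the exposed class: `π_E(θ) = exp(−∫₀^θ (k(τ)+μ) dτ)`. -/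
def piE (μ : ℝ) (k : ℝ → ℝ) (θ : ℝ) : ℝ :=
  Real.exp (-(∫ τ in (0:ℝ)..θ, (k τ + μ)))

/-- Survival kernel of the asymptomatic class:
`π_A(θ) = exp(−∫₀^θ (γ_A ξ + χ(1−ξ) + μ) dτ)`. -/
def piA (μ : ℝ) (γA ξ χ : ℝ → ℝ) (θ : ℝ) : ℝ :=
  Real.exp (-(∫ τ in (0:ℝ)..θ, (γA τ * ξ τ + χ τ * (1 - ξ τ) + μ)))

/-- Survival kernel of the symptomatic class: `π_I(θ) = exp(−∫₀^θ (γ_I(τ)+μ) dτ)`. -/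
def piI (μ : ℝ) (γI : ℝ → ℝ) (θ : ℝ) : ℝ :=
  Real.exp (-(∫ τ in (0:ℝ)..θ, (γI τ + μ)))

/-- An essentially bounded measurable nonnegative coefficient on `ℝ≥0`
(element of `L∞(ℝ≥0; ℝ≥0)`). -/
def CoeffBM (f : ℝ → ℝ) : Prop :=
  Measurable f ∧ (∃ C : ℝ, ∀ θ, 0 ≤ θ → f θ ≤ C) ∧ (∀ θ, 0 ≤ θ → 0 ≤ f θ)

/-- A measurable coefficient with values in `[0,1]` on `ℝ≥0`
(element of `L∞(ℝ≥0; [0,1])`). -/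
def FracBM (f : ℝ → ℝ) : Prop :=
  Measurable f ∧ ∀ θ, 0 ≤ θ → f θ ∈ Set.Icc (0:ℝ) 1

/-- A bounded continuous nonnegative coefficient on `ℝ≥0`. -/
def CoeffBC (f : ℝ → ℝ) : Prop :=
  Continuous f ∧ (∃ C : ℝ, ∀ θ, 0 ≤ θ → f θ ≤ C) ∧ (∀ θ, 0 ≤ θ → 0 ≤ f θ)

/-- A continuous coefficient with values in `[0,1]` on `ℝ≥0`. -/
def FracBC (f : ℝ → ℝ) : Prop :=
  Continuous f ∧ ∀ θ, 0 ≤ θ → f θ ∈ Set.Icc (0:ℝ) 1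

/-- Variation-of-constants expression `S[b]` for the susceptible compartment. -/
def Ssol (μ N0 p S0 : ℝ) (b : ℝ → ℝ) (t : ℝ) : ℝ :=
  S0 * Real.exp (-(∫ s in (0:ℝ)..t, (p + b s + μ))) +
    μ * N0 * ∫ s in (0:ℝ)..t, Real.exp (-(∫ τ in s..t, (p + b τ + μ)))

/-- Variation-of-constants expression `V[b]` for the vaccinated compartment. -/
def Vsol (μ N0 p ζ ε S0 V0 : ℝ) (b : ℝ → ℝ) (t : ℝ) : ℝ :=
  V0 * Real.exp (-(∫ s in (0:ℝ)..t, (ζ * ε + b s * (1 - ε) + μ))) +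
    p * ∫ s in (0:ℝ)..t, Ssol μ N0 p S0 b s *
      Real.exp (-(∫ τ in s..t, (ζ * ε + b τ * (1 - ε) + μ)))

/-- The boundary value `ε̃(t) = β(t)·(S(t) + (1−ε)V(t))`. -/
def epsTilde (μ N0 p ζ ε S0 V0 : ℝ) (β : ℝ → ℝ) (t : ℝ) : ℝ :=
  β t * (Ssol μ N0 p S0 β t + (1 - ε) * Vsol μ N0 p ζ ε S0 V0 β t)

/-- Age density along characteristics: initial datum `f0` transported below the
diagonal, boundary datum `bdry` transported above the diagonal, with survival
kernel `π`. -/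
def dens (π f0 bdry : ℝ → ℝ) (t θ : ℝ) : ℝ :=
  if t < θ then f0 (θ - t) * π θ / π (θ - t) else bdry (t - θ) * π θ

/-- The Volterra integral system for the triple `(β, α, ι)` of boundary values. -/
def VolterraSystem (μ N0 p ζ ε S0 V0 : ℝ)
    (βA βI k χ γA γI q ξ e0 a0 i0 β α ι : ℝ → ℝ) : Prop :=
  ContinuousOn β (Set.Ici 0) ∧ ContinuousOn α (Set.Ici 0) ∧ ContinuousOn ι (Set.Ici 0) ∧
    ∀ t, 0 ≤ t →
      β t = (∫ s in (0:ℝ)..t,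
          (βA (t - s) * α s * piA μ γA ξ χ (t - s) +
            βI (t - s) * ι s * piI μ γI (t - s))) +
        (∫ s in Set.Ioi (0:ℝ),
          (βA (t + s) * a0 s * piA μ γA ξ χ (t + s) / piA μ γA ξ χ s +
            βI (t + s) * i0 s * piI μ γI (t + s) / piI μ γI s)) ∧
      α t = (∫ s in (0:ℝ)..t,
          k (t - s) * q (t - s) * β s *
            (Ssol μ N0 p S0 β s + (1 - ε) * Vsol μ N0 p ζ ε S0 V0 β s) * piE μ k (t - s)) +
        (∫ s in Set.Ioi (0:ℝ),
          k (t + s) * q (t + s) * e0 s * piE μ k (t + s) / piE μ k s) ∧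
      ι t = (∫ s in (0:ℝ)..t,
          (k (t - s) * (1 - q (t - s)) * β s *
              (Ssol μ N0 p S0 β s + (1 - ε) * Vsol μ N0 p ζ ε S0 V0 β s) * piE μ k (t - s) +
            χ (t - s) * (1 - ξ (t - s)) * α s * piA μ γA ξ χ (t - s))) +
        (∫ s in Set.Ioi (0:ℝ),
          (k (t + s) * (1 - q (t + s)) * e0 s * piE μ k (t + s) / piE μ k s +
            χ (t + s) * (1 - ξ (t + s)) * a0 s * piA μ γA ξ χ (t + s) / piA μ γA ξ χ s))

/-- `R_A = (∫₀^∞ k q π_E)·(∫₀^∞ β_A π_A)`. -/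
def RAdef (μ : ℝ) (βA k q γA ξ χ : ℝ → ℝ) : ℝ :=
  (∫ s in Set.Ioi (0:ℝ), k s * q s * piE μ k s) *
    (∫ s in Set.Ioi (0:ℝ), βA s * piA μ γA ξ χ s)

/-- `R_I = (∫₀^∞ k(1−q)π_E + (∫₀^∞ k q π_E)·(∫₀^∞ χ(1−ξ)π_A))·(∫₀^∞ β_I π_I)`. -/
def RIdef (μ : ℝ) (βI k q χ ξ γA γI : ℝ → ℝ) : ℝ :=
  ((∫ s in Set.Ioi (0:ℝ), k s * (1 - q s) * piE μ k s) +
      (∫ s in Set.Ioi (0:ℝ), k s * q s * piE μ k s) *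
        (∫ s in Set.Ioi (0:ℝ), χ s * (1 - ξ s) * piA μ γA ξ χ s)) *
    (∫ s in Set.Ioi (0:ℝ), βI s * piI μ γI s)

/-- The basic reproduction number `R₀`. -/
def R0def (μ N0 p ζ ε : ℝ) (βA βI k χ γA γI q ξ : ℝ → ℝ) : ℝ :=
  (μ * N0 / (p + μ)) * (1 + p * (1 - ε) / (ζ * ε + μ)) *
    (RAdef μ βA k q γA ξ χ + RIdef μ βI k q χ ξ γA γI)

/-- A steady state of the age-structured SVEAIR problem. -/
def SteadyState (μ N0 p ζ ε : ℝ) (βA βI k χ γA γI q ξ : ℝ → ℝ)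
    (Sst Vst βst εst αst ιst : ℝ) (est ast ist : ℝ → ℝ) : Prop :=
  0 ≤ Sst ∧ 0 ≤ Vst ∧ 0 ≤ βst ∧ 0 ≤ εst ∧ 0 ≤ αst ∧ 0 ≤ ιst ∧
    (∀ θ, 0 ≤ θ → 0 ≤ est θ) ∧ (∀ θ, 0 ≤ θ → 0 ≤ ast θ) ∧ (∀ θ, 0 ≤ θ → 0 ≤ ist θ) ∧
    Sst = μ * N0 / (p + βst + μ) ∧
    Vst = p * Sst / (ζ * ε + βst * (1 - ε) + μ) ∧
    (∀ θ, 0 ≤ θ → est θ = εst * piE μ k θ) ∧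
    (∀ θ, 0 ≤ θ → ast θ = αst * piA μ γA ξ χ θ) ∧
    (∀ θ, 0 ≤ θ → ist θ = ιst * piI μ γI θ) ∧
    εst = βst * (Sst + (1 - ε) * Vst) ∧
    αst = (∫ θ in Set.Ioi (0:ℝ), k θ * q θ * est θ) ∧
    ιst = (∫ θ in Set.Ioi (0:ℝ), (k θ * (1 - q θ) * est θ + χ θ * (1 - ξ θ) * ast θ)) ∧
    βst = (∫ θ in Set.Ioi (0:ℝ), (βA θ * ast θ + βI θ * ist θ))

/-- The scalar function `g` whose fixed points characterize steady states. -/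
def gfun (μ N0 p ζ ε RA RI β : ℝ) : ℝ :=
  (μ * N0 / (p + β + μ)) * (1 + p * (1 - ε) / (ζ * ε + β * (1 - ε) + μ)) * (RA + RI)

/-- The Lyapunov weight `f_I`. -/
def fIfun (μ M : ℝ) (βI γI : ℝ → ℝ) (θ : ℝ) : ℝ :=
  M * ∫ s in Set.Ioi θ, βI s * Real.exp (-(∫ τ in θ..s, (γI τ + μ)))

/-- The Lyapunov weight `f_A`. -/
def fAfun (μ M : ℝ) (βA βI γA γI ξ χ : ℝ → ℝ) (θ : ℝ) : ℝ :=
  M * (∫ s in Set.Ioi θ,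
      βA s * Real.exp (-(∫ τ in θ..s, (γA τ * ξ τ + χ τ * (1 - ξ τ) + μ)))) +
    fIfun μ M βI γI 0 * ∫ s in Set.Ioi θ,
      χ s * (1 - ξ s) * Real.exp (-(∫ τ in θ..s, (γA τ * ξ τ + χ τ * (1 - ξ τ) + μ)))

/-- The Lyapunov weight `f_E`. -/
def fEfun (μ M : ℝ) (βA βI k q γA γI ξ χ : ℝ → ℝ) (θ : ℝ) : ℝ :=
  fAfun μ M βA βI γA γI ξ χ 0 *
      (∫ s in Set.Ioi θ, k s * q s * Real.exp (-(∫ τ in θ..s, (k τ + μ)))) +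
    fIfun μ M βI γI 0 *
      ∫ s in Set.Ioi θ, k s * (1 - q s) * Real.exp (-(∫ τ in θ..s, (k τ + μ)))

/-!
Each compartment obeys a balance law in integrated form: its size at time `T` is its initial
size plus the integral over `[0, T]` of its net flux. For `S` and `V` this is the
variation-of-constants formula, for `R` the fundamental theorem of calculus, and for an age
density transported along characteristics it follows from `π(a) - π(b) = ∫_a^b m π` for the
survival function `π = exp (-∫₀ m)` together with Fubini. The Volterra equations say that the
boundary inflows `α` and `ι` are exactly the transfer outflows `∫ k q e` and
`∫ k (1 - q) e + ∫ χ (1 - ξ) a`, so in the sum only births and deaths survive and the total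
population satisfies `N T = N0 + ∫₀^T μ (N0 - N)`. Then `(N - N0) e^{μ t}` is constant, so
`N = N0`.
-/

open Set intervalIntegral

section Coefficients

variable {f g : ℝ → ℝ}

theorem CoeffBM.const {c : ℝ} (hc : 0 ≤ c) : CoeffBM fun _ => c :=
  ⟨measurable_const, ⟨c, fun _ _ => le_rfl⟩, fun _ _ => hc⟩

theorem CoeffBM.add (hf : CoeffBM f) (hg : CoeffBM g) : CoeffBM fun θ => f θ + g θ := by
  obtain ⟨hfm, ⟨C, hC⟩, hf0⟩ := hf
  obtain ⟨hgm, ⟨D, hD⟩, hg0⟩ := hg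
  exact ⟨hfm.add hgm, ⟨C + D, fun θ hθ => add_le_add (hC θ hθ) (hD θ hθ)⟩,
    fun θ hθ => add_nonneg (hf0 θ hθ) (hg0 θ hθ)⟩

theorem CoeffBM.mul (hf : CoeffBM f) (hg : CoeffBM g) : CoeffBM fun θ => f θ * g θ := by
  obtain ⟨hfm, ⟨C, hC⟩, hf0⟩ := hf
  obtain ⟨hgm, ⟨D, hD⟩, hg0⟩ := hg
  exact ⟨hfm.mul hgm, ⟨C * D, fun θ hθ =>
    mul_le_mul (hC θ hθ) (hD θ hθ) (hg0 θ hθ) ((hf0 θ hθ).trans (hC θ hθ))⟩,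
    fun θ hθ => mul_nonneg (hf0 θ hθ) (hg0 θ hθ)⟩

theorem FracBM.coeffBM (hf : FracBM f) : CoeffBM f :=
  ⟨hf.1, ⟨1, fun θ hθ => (hf.2 θ hθ).2⟩, fun θ hθ => (hf.2 θ hθ).1⟩

theorem FracBM.one_sub (hf : FracBM f) : FracBM fun θ => 1 - f θ :=
  ⟨measurable_const.sub hf.1, fun θ hθ => by
    obtain ⟨h0, h1⟩ := hf.2 θ hθ
    constructor <;> linarith⟩

theorem CoeffBM.exists_abs_le (hf : CoeffBM f) : ∃ C, ∀ θ, 0 ≤ θ → |f θ| ≤ C := by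
  obtain ⟨-, ⟨C, hC⟩, hf0⟩ := hf
  exact ⟨C, fun θ hθ => (abs_of_nonneg (hf0 θ hθ)).trans_le (hC θ hθ)⟩

theorem CoeffBM.integrableOn_Ioc (hf : CoeffBM f) {a b : ℝ} (ha : 0 ≤ a) :
    IntegrableOn f (Ioc a b) := by
  obtain ⟨C, hC⟩ := hf.exists_abs_le
  refine Measure.integrableOn_of_bounded measure_Ioc_lt_top.ne hf.1.aestronglyMeasurable
    ((ae_restrict_iff' measurableSet_Ioc).2 (ae_of_all _ fun θ hθ => ?_)) (M := C)
  exact hC θ (ha.trans hθ.1.le)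

theorem CoeffBM.intervalIntegrable (hf : CoeffBM f) {a b : ℝ} (ha : 0 ≤ a) (hb : 0 ≤ b) :
    IntervalIntegrable f volume a b :=
  ⟨hf.integrableOn_Ioc ha, hf.integrableOn_Ioc hb⟩

theorem CoeffBM.integral_nonneg (hf : CoeffBM f) {a b : ℝ} (ha : 0 ≤ a) (hab : a ≤ b) :
    0 ≤ ∫ τ in a..b, f τ :=
  intervalIntegral.integral_nonneg hab fun τ hτ => hf.2.2 τ (ha.trans hτ.1)

end Coefficients

section Survival

def survival (m : ℝ → ℝ) (θ : ℝ) : ℝ :=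
  Real.exp (-(∫ τ in (0:ℝ)..θ, m τ))

variable {m : ℝ → ℝ}

theorem survival_pos (m : ℝ → ℝ) (θ : ℝ) : 0 < survival m θ := Real.exp_pos _

@[simp] theorem survival_zero (m : ℝ → ℝ) : survival m 0 = 1 := by simp [survival]

theorem measurable_survival (hm : Measurable m) : Measurable (survival m) := by
  have hIoc : ∀ l r : ℝ → ℝ, Measurable l → Measurable r →
      Measurable fun θ => ∫ τ in Ioc (l θ) (r θ), m τ := fun l r hl hr => by
    have hset : MeasurableSet {p : ℝ × ℝ | p.2 ∈ Ioc (l p.1) (r p.1)} :=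
      (measurableSet_lt (hl.comp measurable_fst) measurable_snd).inter
        (measurableSet_le measurable_snd (hr.comp measurable_fst))
    have := (StronglyMeasurable.integral_prod_right' (ν := volume)
      ((hm.comp measurable_snd).indicator hset).stronglyMeasurable).measurable
    convert this using 2 with θ
    rw [← MeasureTheory.integral_indicator measurableSet_Ioc]
    rfl
  exact Real.measurable_exp.comp
    ((hIoc _ _ measurable_const measurable_id).sub (hIoc _ _ measurable_id measurable_const)).neg

theorem survival_eq_mul (hm : CoeffBM m) {a b : ℝ} (ha : 0 ≤ a) (hb : 0 ≤ b) :
    survival m b = survival m a * Real.exp (-(∫ τ in a..b, m τ)) := by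
  rw [survival, survival, ← Real.exp_add, ← integral_add_adjacent_intervals
    (hm.intervalIntegrable le_rfl ha) (hm.intervalIntegrable ha hb)]
  ring_nf

theorem survival_div_le_one (hm : CoeffBM m) {a b : ℝ} (ha : 0 ≤ a) (hab : a ≤ b) :
    survival m b / survival m a ≤ 1 := by
  rw [survival_eq_mul hm ha (ha.trans hab), mul_div_cancel_left₀ _ (survival_pos m a).ne',
    Real.exp_le_one_iff, neg_nonpos]
  exact hm.integral_nonneg ha hab

theorem survival_le_one (hm : CoeffBM m) {θ : ℝ} (hθ : 0 ≤ θ) : survival m θ ≤ 1 := by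
  simpa using survival_div_le_one hm le_rfl hθ

theorem survival_div_nonneg (m : ℝ → ℝ) (a b : ℝ) : 0 ≤ survival m b / survival m a :=
  div_nonneg (survival_pos m b).le (survival_pos m a).le

theorem lipschitzOnWith_survival (hm : CoeffBM m) :
    ∃ K, LipschitzOnWith K (survival m) (Ici 0) := by
  obtain ⟨C, hC⟩ := hm.2.1
  have key : ∀ x y : ℝ, 0 ≤ x → x ≤ y →
      |survival m x - survival m y| ≤ C.toNNReal * (y - x) := by
    intro x y hx hxy
    set I := ∫ τ in x..y, m τ
    have hI : I ≤ C * (y - x) := by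
      simpa [mul_comm] using intervalIntegral.integral_mono_on hxy
        (hm.intervalIntegrable hx (hx.trans hxy)) intervalIntegrable_const
        fun τ hτ => hC τ (hx.trans hτ.1)
    have hexp : 1 - Real.exp (-I) ≤ I := by linarith [Real.add_one_le_exp (-I)]
    have hexp' : Real.exp (-I) ≤ 1 :=
      Real.exp_le_one_iff.2 (neg_nonpos.2 (hm.integral_nonneg hx hxy))
    rw [survival_eq_mul hm hx (hx.trans hxy), abs_of_nonneg (by
      nlinarith [survival_pos m x])]
    calc survival m x - survival m x * Real.exp (-I)
        = survival m x * (1 - Real.exp (-I)) := by ring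
      _ ≤ 1 * I := mul_le_mul (survival_le_one hm hx) hexp (by linarith) zero_le_one
      _ ≤ C.toNNReal * (y - x) := by
        rw [one_mul, Real.coe_toNNReal']
        exact hI.trans (mul_le_mul_of_nonneg_right (le_max_left _ _) (by linarith))
  refine ⟨C.toNNReal, LipschitzOnWith.of_dist_le_mul fun x hx y hy => ?_⟩
  rw [Real.dist_eq, Real.dist_eq]
  rcases le_total x y with hxy | hxy
  · simpa [abs_of_nonpos (sub_nonpos.2 hxy)] using key x y hx hxy
  · simpa [abs_sub_comm, abs_of_nonneg (sub_nonneg.2 hxy)] using key y x hy hxy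

theorem continuousOn_survival (hm : CoeffBM m) : ContinuousOn (survival m) (Ici 0) :=
  (lipschitzOnWith_survival hm).choose_spec.continuousOn

/-- As `m` is only measurable, this goes through the absolute continuity of `survival m`
and the Lebesgue differentiation theorem. -/
theorem survival_sub_survival (hm : CoeffBM m) {a b : ℝ} (ha : 0 ≤ a) (hab : a ≤ b) :
    survival m a - survival m b = ∫ u in a..b, m u * survival m u := by
  have hb : 0 ≤ b := ha.trans hab
  obtain ⟨K, hK⟩ := lipschitzOnWith_survival hm
  have hac : AbsolutelyContinuousOnInterval (survival m) a b :=
    (hK.mono fun x hx => (le_min ha hb).trans hx.1).absolutelyContinuousOnInterval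
  have hderiv : ∀ᵐ u, u ∈ uIoc a b → -(m u * survival m u) = deriv (survival m) u := by
    filter_upwards [(hm.intervalIntegrable le_rfl hb).ae_hasDerivAt_integral] with u hu hmem
    have hu' : u ∈ uIcc 0 b := by
      rw [uIcc_of_le hb]; rw [uIoc_of_le hab] at hmem; exact ⟨ha.trans hmem.1.le, hmem.2⟩
    have : HasDerivAt (survival m) (survival m u * -m u) u :=
      (hu hu' 0 (by simp [hb])).neg.exp
    rw [this.deriv]; ring
  rw [← neg_sub, ← hac.integral_deriv_eq_sub, ← integral_congr_ae hderiv,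
    intervalIntegral.integral_neg, neg_neg]

end Survival

section Density

theorem setIntegral_Ioi_eq_shift (F : ℝ → ℝ) (t : ℝ) :
    ∫ θ in Ioi t, F θ = ∫ s in Ioi 0, F (t + s) := by
  have := (measurePreserving_add_left volume t).setIntegral_preimage_emb
    (measurableEmbedding_addLeft t) F (Ioi t)
  rwa [preimage_const_add_Ioi, sub_self, eq_comm] at this

theorem integrableOn_Ioi_iff_shift {F : ℝ → ℝ} (t : ℝ) :
    IntegrableOn F (Ioi t) ↔ IntegrableOn (fun s => F (t + s)) (Ioi 0) := by
  have := (measurePreserving_add_left volume t).integrableOn_comp_preimage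
    (measurableEmbedding_addLeft t) (f := F) (s := Ioi t)
  rw [preimage_const_add_Ioi, sub_self] at this
  exact this.symm

variable {π m w f0 g : ℝ → ℝ} {t θ : ℝ}

theorem dens_of_lt (h : t < θ) : dens π f0 g t θ = f0 (θ - t) * π θ / π (θ - t) := if_pos h

theorem dens_of_le (h : θ ≤ t) : dens π f0 g t θ = g (t - θ) * π θ := if_neg h.not_gt

theorem integrableOn_shift_mul (hm : CoeffBM m) (hw : CoeffBM w)
    (hf0 : IntegrableOn f0 (Ioi 0)) (ht : 0 ≤ t) :
    IntegrableOn (fun s => w (t + s) * (f0 s * (survival m (t + s) / survival m s))) (Ioi 0) := by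
  obtain ⟨C, hC⟩ := hw.exists_abs_le
  have hmeas : Measurable fun s => w (t + s) * (survival m (t + s) / survival m s) :=
    (hw.1.comp (measurable_const_add t)).mul
      (((measurable_survival hm.1).comp (measurable_const_add t)).div (measurable_survival hm.1))
  refine (hf0.bdd_mul hmeas.aestronglyMeasurable (c := C) ?_).congr
    (ae_of_all _ fun s => by ring)
  refine (ae_restrict_iff' measurableSet_Ioi).2 (ae_of_all _ fun s (hs : 0 < s) => ?_)
  rw [Real.norm_eq_abs, abs_mul, abs_of_nonneg (survival_div_nonneg m _ _)]
  exact (mul_le_of_le_one_right (abs_nonneg _) (survival_div_le_one hm hs.le (by linarith))).trans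
    (hC _ (by linarith))

theorem intervalIntegrable_conv_mul (hm : CoeffBM m) (hw : CoeffBM w)
    (hg : ContinuousOn g (Ici 0)) (ht : 0 ≤ t) :
    IntervalIntegrable (fun s => w (t - s) * (g s * survival m (t - s))) volume 0 t := by
  obtain ⟨C, hC⟩ := hw.exists_abs_le
  have hcont : ContinuousOn (fun s => g s * survival m (t - s)) (Icc 0 t) :=
    (hg.mono fun s hs => hs.1).mul ((continuousOn_survival hm).comp
      (continuousOn_const.sub continuousOn_id) fun s hs => sub_nonneg.2 hs.2)
  rw [intervalIntegrable_iff_integrableOn_Ioc_of_le ht]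
  refine ((hcont.integrableOn_Icc.mono_set Ioc_subset_Icc_self).bdd_mul
    (hw.1.comp (measurable_const_sub t)).aestronglyMeasurable (c := C) ?_)
  refine (ae_restrict_iff' measurableSet_Ioc).2 (ae_of_all _ fun s hs => ?_)
  exact hC _ (sub_nonneg.2 hs.2)

theorem integrableOn_mul_dens (hm : CoeffBM m) (hw : CoeffBM w)
    (hf0 : IntegrableOn f0 (Ioi 0)) (hg : ContinuousOn g (Ici 0)) (ht : 0 ≤ t) :
    IntegrableOn (fun θ => w θ * dens (survival m) f0 g t θ) (Ioi 0) := by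
  rw [← Ioc_union_Ioi_eq_Ioi ht]
  refine IntegrableOn.union ?_ ?_
  · have := ((intervalIntegrable_conv_mul hm hw hg ht).comp_sub_left t).symm
    rw [sub_self, sub_zero, intervalIntegrable_iff_integrableOn_Ioc_of_le ht] at this
    refine this.congr_fun (fun θ hθ => ?_) measurableSet_Ioc
    simp only [sub_sub_cancel, dens_of_le hθ.2]
  · rw [integrableOn_Ioi_iff_shift]
    refine (integrableOn_shift_mul hm hw hf0 ht).congr_fun (fun s (hs : 0 < s) => ?_)
      measurableSet_Ioi
    rw [dens_of_lt (by linarith), add_sub_cancel_left, mul_div_assoc]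

theorem integral_mul_dens (hm : CoeffBM m) (hw : CoeffBM w)
    (hf0 : IntegrableOn f0 (Ioi 0)) (hg : ContinuousOn g (Ici 0)) (ht : 0 ≤ t) :
    ∫ θ in Ioi 0, w θ * dens (survival m) f0 g t θ =
      (∫ s in Ioi 0, w (t + s) * (f0 s * (survival m (t + s) / survival m s))) +
        ∫ s in (0:ℝ)..t, w (t - s) * (g s * survival m (t - s)) := by
  have hint := integrableOn_mul_dens hm hw hf0 hg ht
  rw [← Ioc_union_Ioi_eq_Ioi ht] at hint
  conv_lhs => rw [← Ioc_union_Ioi_eq_Ioi ht]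
  rw [setIntegral_union Ioc_disjoint_Ioi_same measurableSet_Ioi
    (hint.mono_set subset_union_left) (hint.mono_set subset_union_right), add_comm,
    setIntegral_Ioi_eq_shift]
  congr 1
  · refine setIntegral_congr_fun measurableSet_Ioi fun s hs => ?_
    rw [dens_of_lt (lt_add_of_pos_right t hs), add_sub_cancel_left, mul_div_assoc]
  · have := intervalIntegral.integral_comp_sub_left
      (fun θ => w θ * (g (t - θ) * survival m θ)) t (a := 0) (b := t)
    simp only [sub_sub_cancel, sub_self, sub_zero] at this
    rw [this, integral_of_le ht]
    exact setIntegral_congr_fun measurableSet_Ioc fun θ hθ => by rw [dens_of_le hθ.2]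

end Density

section Fubini

theorem setIntegral_Ioc_ite_le_left (F : ℝ → ℝ) {s T : ℝ} (hs : 0 < s) (hsT : s ≤ T) :
    ∫ u in Ioc 0 T, (if s ≤ u then F u else 0) = ∫ u in s..T, F u := by
  have hset : Ioc 0 T ∩ Ici s = Icc s T := by
    ext u; simp only [mem_inter_iff, mem_Ioc, mem_Ici, mem_Icc]; grind
  have hind : (fun u => if s ≤ u then F u else 0) = (Ici s).indicator F := by
    ext u; simp [indicator_apply]
  rw [hind, setIntegral_indicator measurableSet_Ici, hset, integral_Icc_eq_integral_Ioc,
    integral_of_le hsT]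

theorem setIntegral_Ioc_ite_le_right (F : ℝ → ℝ) {u T : ℝ} (hu : 0 ≤ u) (huT : u ≤ T) :
    ∫ s in Ioc 0 T, (if s ≤ u then F s else 0) = ∫ s in (0:ℝ)..u, F s := by
  have hset : Ioc 0 T ∩ Iic u = Ioc 0 u := by
    ext s; simp only [mem_inter_iff, mem_Ioc, mem_Iic]; grind
  have hind : (fun s => if s ≤ u then F s else 0) = (Iic u).indicator F := by
    ext s; simp [indicator_apply]
  rw [hind, setIntegral_indicator measurableSet_Iic, hset, integral_of_le hu]

variable {m w f0 g : ℝ → ℝ} {T : ℝ}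

theorem integrable_prod_shift (hm : CoeffBM m) (hw : CoeffBM w)
    (hf0 : IntegrableOn f0 (Ioi 0)) :
    Integrable (fun p : ℝ × ℝ => w (p.1 + p.2) * (f0 p.2 * (survival m (p.1 + p.2) /
      survival m p.2))) ((volume.restrict (Ioc 0 T)).prod (volume.restrict (Ioi 0))) := by
  obtain ⟨C, hC⟩ := hw.exists_abs_le
  have hadd : Measurable fun p : ℝ × ℝ => p.1 + p.2 := measurable_fst.add measurable_snd
  have hmeas : AEStronglyMeasurable (fun p : ℝ × ℝ => w (p.1 + p.2) *
      (f0 p.2 * (survival m (p.1 + p.2) / survival m p.2)))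
      ((volume.restrict (Ioc 0 T)).prod (volume.restrict (Ioi 0))) :=
    (hw.1.comp hadd).aestronglyMeasurable.mul (hf0.1.comp_snd.mul
      (((measurable_survival hm.1).comp hadd).div
        ((measurable_survival hm.1).comp measurable_snd)).aestronglyMeasurable)
  refine ((integrableOn_const (C := C) measure_Ioc_lt_top.ne).mul_prod hf0.norm).mono' hmeas ?_
  rw [Measure.prod_restrict]
  refine (ae_restrict_iff' (measurableSet_Ioc.prod measurableSet_Ioi)).2
    (ae_of_all _ fun p ⟨hu, hs⟩ => ?_)
  have hs : 0 < p.2 := hs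
  have hr := survival_div_le_one hm hs.le (le_add_of_nonneg_left hu.1.le)
  have hw' := hC _ (add_nonneg hu.1.le hs.le)
  rw [norm_mul, norm_mul, Real.norm_of_nonneg (survival_div_nonneg m _ _), Real.norm_eq_abs]
  calc |w (p.1 + p.2)| * (‖f0 p.2‖ * (survival m (p.1 + p.2) / survival m p.2))
      ≤ C * (‖f0 p.2‖ * 1) := mul_le_mul hw' (mul_le_mul_of_nonneg_left hr (norm_nonneg _))
        (mul_nonneg (norm_nonneg _) (survival_div_nonneg m _ _)) ((abs_nonneg _).trans hw')
    _ = C * ‖f0 p.2‖ := by ring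

theorem integrable_prod_conv (hm : CoeffBM m) (hw : CoeffBM w)
    (hg : ContinuousOn g (Ici 0)) (hT : 0 ≤ T) :
    Integrable (fun p : ℝ × ℝ =>
        if p.2 ≤ p.1 then w (p.1 - p.2) * (g p.2 * survival m (p.1 - p.2)) else 0)
      ((volume.restrict (Ioc 0 T)).prod (volume.restrict (Ioc 0 T))) := by
  obtain ⟨C, hC⟩ := hw.exists_abs_le
  obtain ⟨M, hM⟩ := isCompact_Icc.exists_bound_of_continuousOn
    (hg.mono fun s (hs : s ∈ Icc 0 T) => hs.1)
  have hsub : Measurable fun p : ℝ × ℝ => p.1 - p.2 := measurable_fst.sub measurable_snd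
  have hmeas : AEStronglyMeasurable (fun p : ℝ × ℝ =>
      w (p.1 - p.2) * (g p.2 * survival m (p.1 - p.2)))
      ((volume.restrict (Ioc 0 T)).prod (volume.restrict (Ioc 0 T))) :=
    (hw.1.comp hsub).aestronglyMeasurable.mul
      (((hg.mono fun s hs => hs.1.le).aestronglyMeasurable measurableSet_Ioc).comp_snd.mul
        ((measurable_survival hm.1).comp hsub).aestronglyMeasurable)
  refine Integrable.of_bound ((hmeas.indicator
      (measurableSet_le measurable_snd measurable_fst)).congr
      (ae_of_all _ fun p => by simp [indicator_apply])) (C * M) ?_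
  rw [Measure.prod_restrict]
  refine (ae_restrict_iff' (measurableSet_Ioc.prod measurableSet_Ioc)).2
    (ae_of_all _ fun p ⟨hu, hs⟩ => ?_)
  have hC0 : 0 ≤ C := (abs_nonneg _).trans (hC 0 le_rfl)
  have hM0 : 0 ≤ M := (norm_nonneg _).trans (hM 0 ⟨le_rfl, hT⟩)
  split_ifs with hsu
  · have hw' := hC _ (sub_nonneg.2 hsu)
    have hg' := hM p.2 ⟨hs.1.le, hs.2⟩
    have hπ := survival_le_one hm (sub_nonneg.2 hsu)
    rw [norm_mul, norm_mul, Real.norm_of_nonneg (survival_pos m _).le, Real.norm_eq_abs]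
    calc |w (p.1 - p.2)| * (‖g p.2‖ * survival m (p.1 - p.2)) ≤ C * (M * 1) :=
          mul_le_mul hw' (mul_le_mul hg' hπ (survival_pos m _).le hM0)
            (mul_nonneg (norm_nonneg _) (survival_pos m _).le) hC0
      _ = C * M := by ring
  · simpa using mul_nonneg hC0 hM0

theorem intervalIntegrable_integral_shift (hm : CoeffBM m) (hw : CoeffBM w)
    (hf0 : IntegrableOn f0 (Ioi 0)) (hT : 0 ≤ T) :
    IntervalIntegrable (fun u => ∫ s in Ioi 0,
      w (u + s) * (f0 s * (survival m (u + s) / survival m s))) volume 0 T := by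
  rw [intervalIntegrable_iff_integrableOn_Ioc_of_le hT]
  exact (integrable_prod_shift (T := T) hm hw hf0).integral_prod_left

theorem intervalIntegrable_integral_conv (hm : CoeffBM m) (hw : CoeffBM w)
    (hg : ContinuousOn g (Ici 0)) (hT : 0 ≤ T) :
    IntervalIntegrable (fun u => ∫ s in (0:ℝ)..u,
      w (u - s) * (g s * survival m (u - s))) volume 0 T := by
  rw [intervalIntegrable_iff_integrableOn_Ioc_of_le hT]
  refine (integrable_prod_conv hm hw hg hT).integral_prod_left.congr ?_
  filter_upwards [ae_restrict_mem measurableSet_Ioc] with u hu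
  exact setIntegral_Ioc_ite_le_right _ hu.1.le hu.2

theorem intervalIntegrable_integral_mul_dens (hm : CoeffBM m) (hw : CoeffBM w)
    (hf0 : IntegrableOn f0 (Ioi 0)) (hg : ContinuousOn g (Ici 0)) (hT : 0 ≤ T) :
    IntervalIntegrable (fun u => ∫ θ in Ioi 0, w θ * dens (survival m) f0 g u θ)
      volume 0 T := by
  refine ((intervalIntegrable_integral_shift hm hw hf0 hT).add
    (intervalIntegrable_integral_conv hm hw hg hT)).congr_ae ?_
  rw [uIoc_of_le hT]
  filter_upwards [ae_restrict_mem measurableSet_Ioc] with u hu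
  exact (integral_mul_dens hm hw hf0 hg hu.1.le).symm

end Fubini

section Balance

variable {m f0 g : ℝ → ℝ} {T : ℝ}

theorem integral_shift_survival (hm : CoeffBM m) (hf0 : IntegrableOn f0 (Ioi 0)) (hT : 0 ≤ T) :
    ∫ s in Ioi 0, f0 s * (survival m (T + s) / survival m s) =
      (∫ s in Ioi 0, f0 s) - ∫ u in (0:ℝ)..T, ∫ s in Ioi 0,
        m (u + s) * (f0 s * (survival m (u + s) / survival m s)) := by
  have hΦ := integrable_prod_shift (T := T) hm hm hf0
  have hpt : ∀ s, 0 < s → f0 s * (survival m (T + s) / survival m s) =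
      f0 s - ∫ u in (0:ℝ)..T, m (u + s) * (f0 s * (survival m (u + s) / survival m s)) := by
    intro s hs
    have hftc : ∫ u in (0:ℝ)..T, m (u + s) * survival m (u + s) =
        survival m s - survival m (T + s) := by
      rw [intervalIntegral.integral_comp_add_right (fun θ => m θ * survival m θ), zero_add,
        survival_sub_survival hm hs.le (by linarith), add_comm]
    have hπ := (survival_pos m s).ne'
    calc f0 s * (survival m (T + s) / survival m s)
        = f0 s - f0 s / survival m s * (survival m s - survival m (T + s)) := by
          field_simp; ring
      _ = _ := by
          rw [← hftc, ← intervalIntegral.integral_const_mul]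
          congr 1
          exact intervalIntegral.integral_congr fun u _ => by ring
  have hinner : IntegrableOn (fun s => ∫ u in (0:ℝ)..T,
      m (u + s) * (f0 s * (survival m (u + s) / survival m s))) (Ioi 0) :=
    hΦ.integral_prod_right.congr (ae_of_all _ fun s => (integral_of_le hT).symm)
  rw [setIntegral_congr_fun measurableSet_Ioi hpt, integral_sub hf0 hinner]
  congr 1
  simp only [integral_of_le hT]
  exact (integral_integral_swap hΦ).symm

theorem integral_conv_survival (hm : CoeffBM m) (hg : ContinuousOn g (Ici 0)) (hT : 0 ≤ T) :
    ∫ s in (0:ℝ)..T, g s * survival m (T - s) =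
      (∫ s in (0:ℝ)..T, g s) - ∫ u in (0:ℝ)..T, ∫ s in (0:ℝ)..u,
        m (u - s) * (g s * survival m (u - s)) := by
  have hΨ := integrable_prod_conv hm hm hg hT
  have hpt : ∀ s ∈ Ioc 0 T, g s * survival m (T - s) =
      g s - ∫ u in s..T, m (u - s) * (g s * survival m (u - s)) := by
    intro s hs
    have hftc : ∫ u in s..T, m (u - s) * survival m (u - s) = 1 - survival m (T - s) := by
      rw [intervalIntegral.integral_comp_sub_right (fun θ => m θ * survival m θ), sub_self,
        ← survival_sub_survival hm le_rfl (sub_nonneg.2 hs.2), survival_zero]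
    calc g s * survival m (T - s) = g s - g s * (1 - survival m (T - s)) := by ring
      _ = _ := by
        rw [← hftc, ← intervalIntegral.integral_const_mul]
        congr 1
        exact intervalIntegral.integral_congr fun u _ => by ring
  have hinner : IntervalIntegrable (fun s => ∫ u in s..T,
      m (u - s) * (g s * survival m (u - s))) volume 0 T := by
    rw [intervalIntegrable_iff_integrableOn_Ioc_of_le hT]
    refine hΨ.integral_prod_right.congr ?_
    filter_upwards [ae_restrict_mem measurableSet_Ioc] with s hs
    exact setIntegral_Ioc_ite_le_left _ hs.1 hs.2
  have hgi : IntervalIntegrable g volume 0 T :=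
    (hg.mono fun s hs => by rw [uIcc_of_le hT] at hs; exact hs.1).intervalIntegrable
  rw [integral_congr_ae (ae_of_all _ fun s hs => hpt s (by rwa [uIoc_of_le hT] at hs)),
    intervalIntegral.integral_sub hgi hinner]
  congr 1
  simp only [integral_of_le hT]
  -- Fubini on the square `Ioc 0 T ×ˢ Ioc 0 T`, the triangle `s ≤ u` being cut out by an `if`
  calc ∫ s in Ioc 0 T, ∫ u in s..T, m (u - s) * (g s * survival m (u - s))
      = ∫ s in Ioc 0 T, ∫ u in Ioc 0 T,
          if s ≤ u then m (u - s) * (g s * survival m (u - s)) else 0 :=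
        setIntegral_congr_fun measurableSet_Ioc fun s hs =>
          (setIntegral_Ioc_ite_le_left _ hs.1 hs.2).symm
    _ = ∫ u in Ioc 0 T, ∫ s in Ioc 0 T,
          if s ≤ u then m (u - s) * (g s * survival m (u - s)) else 0 :=
        (integral_integral_swap hΨ).symm
    _ = ∫ u in Ioc 0 T, ∫ s in (0:ℝ)..u, m (u - s) * (g s * survival m (u - s)) :=
        setIntegral_congr_fun measurableSet_Ioc fun u hu =>
          setIntegral_Ioc_ite_le_right _ hu.1.le hu.2

theorem integral_dens_eq (hm : CoeffBM m) (hf0 : IntegrableOn f0 (Ioi 0))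
    (hg : ContinuousOn g (Ici 0)) (hT : 0 ≤ T) :
    ∫ θ in Ioi 0, dens (survival m) f0 g T θ = (∫ θ in Ioi 0, f0 θ) +
      ∫ u in (0:ℝ)..T, (g u - ∫ θ in Ioi 0, m θ * dens (survival m) f0 g u θ) := by
  have hone : CoeffBM fun _ => (1:ℝ) := CoeffBM.const zero_le_one
  have hsplit := integral_mul_dens hm hone hf0 hg hT
  simp only [one_mul] at hsplit
  have hgi : IntervalIntegrable g volume 0 T :=
    (hg.mono fun s hs => by rw [uIcc_of_le hT] at hs; exact hs.1).intervalIntegrable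
  have hexit : ∫ u in (0:ℝ)..T, ∫ θ in Ioi 0, m θ * dens (survival m) f0 g u θ =
      (∫ u in (0:ℝ)..T, ∫ s in Ioi 0,
          m (u + s) * (f0 s * (survival m (u + s) / survival m s))) +
        ∫ u in (0:ℝ)..T, ∫ s in (0:ℝ)..u, m (u - s) * (g s * survival m (u - s)) := by
    rw [← intervalIntegral.integral_add (intervalIntegrable_integral_shift hm hm hf0 hT)
      (intervalIntegrable_integral_conv hm hm hg hT)]
    refine intervalIntegral.integral_congr fun u hu => ?_
    rw [uIcc_of_le hT] at hu
    exact integral_mul_dens hm hm hf0 hg hu.1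
  rw [hsplit, integral_shift_survival hm hf0 hT, integral_conv_survival hm hg hT,
    intervalIntegral.integral_sub hgi (intervalIntegrable_integral_mul_dens hm hm hf0 hg hT),
    hexit]
  ring

end Balance

section Flux

def HasFlux (X : ℝ → ℝ) (x₀ : ℝ) (F : ℝ → ℝ) : Prop :=
  ∀ T, 0 ≤ T → IntervalIntegrable F volume 0 T ∧ X T = x₀ + ∫ u in (0:ℝ)..T, F u

variable {X Y F G : ℝ → ℝ} {x₀ y₀ : ℝ}

theorem HasFlux.of_hasDerivWithinAt (hX : ∀ t, 0 ≤ t → HasDerivWithinAt X (F t) (Ici 0) t)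
    (hF : ∀ T, 0 ≤ T → IntervalIntegrable F volume 0 T) : HasFlux X (X 0) F := by
  refine fun T hT => ⟨hF T hT, ?_⟩
  rw [integral_eq_sub_of_hasDeriv_right_of_le hT
    (fun t ht => (hX t ht.1).continuousWithinAt.mono fun s hs => hs.1)
    (fun t ht => (hX t ht.1.le).mono fun s hs => ht.1.le.trans hs.out.le) (hF T hT)]
  ring

theorem HasFlux.add (hX : HasFlux X x₀ F) (hY : HasFlux Y y₀ G) :
    HasFlux (fun t => X t + Y t) (x₀ + y₀) (fun u => F u + G u) := fun T hT => by
  obtain ⟨hFi, hXT⟩ := hX T hT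
  obtain ⟨hGi, hYT⟩ := hY T hT
  refine ⟨hFi.add hGi, ?_⟩
  show X T + Y T = _
  rw [hXT, hYT, intervalIntegral.integral_add hFi hGi]
  ring

theorem HasFlux.congr (h : HasFlux X x₀ F) (hXY : EqOn X Y (Ici 0)) (hFG : EqOn F G (Ici 0)) :
    HasFlux Y x₀ G := fun T hT => by
  have hFG' : EqOn F G (uIcc 0 T) := hFG.mono fun u hu => by
    rw [uIcc_of_le hT] at hu; exact hu.1
  obtain ⟨hFi, hXT⟩ := h T hT
  exact ⟨hFi.congr_ae ((ae_restrict_iff' measurableSet_uIoc).2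
      (ae_of_all _ fun u hu => hFG' (uIoc_subset_uIcc hu))),
    by rw [← hXY hT, hXT, intervalIntegral.integral_congr hFG']⟩

theorem HasFlux.continuousOn (h : HasFlux X x₀ F) : ContinuousOn X (Ici 0) := by
  intro t ht
  have hT : (0:ℝ) ≤ t + 1 := by linarith [ht.out]
  have hprim := intervalIntegral.continuousOn_primitive_interval' (h (t + 1) hT).1
    left_mem_uIcc
  rw [uIcc_of_le hT] at hprim
  have hXc : ContinuousOn X (Icc 0 (t + 1)) :=
    (continuousOn_const.add hprim).congr fun s hs => (h s hs.1).2
  exact (hXc t ⟨ht, by linarith⟩).mono_of_mem_nhdsWithin (mem_of_superset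
    (inter_mem_nhdsWithin (Ici 0) (Iic_mem_nhds (lt_add_one t))) fun s hs => ⟨hs.1, hs.2⟩)

theorem HasFlux.hasDerivAt (h : HasFlux X x₀ F) (hF : ContinuousOn F (Ici 0)) {t : ℝ}
    (ht : 0 < t) : HasDerivAt X (F t) t := by
  have hd := intervalIntegral.integral_hasDerivAt_right
    (hF.mono fun s hs => by rw [uIcc_of_le ht.le] at hs; exact hs.1).intervalIntegrable
    ((hF.mono Ioi_subset_Ici_self).stronglyMeasurableAtFilter isOpen_Ioi t ht)
    (hF.continuousAt (Ici_mem_nhds ht))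
  refine (hd.const_add x₀).congr_of_eventuallyEq ?_
  filter_upwards [Ici_mem_nhds ht] with s hs using (h s hs).2

theorem HasFlux.eq_of_flux_eq_mul_sub {μ c : ℝ} (h : HasFlux X c fun u => μ * (c - X u)) :
    ∀ t, 0 ≤ t → X t = c := by
  have hX0 : X 0 = c := by simpa using (h 0 le_rfl).2
  intro t ht
  rcases ht.eq_or_lt with rfl | ht
  · exact hX0
  have hXc := h.continuousOn
  set φ := fun s => (X s - c) * Real.exp (μ * s)
  have hφ : ∀ s ∈ Ioo 0 t, HasDerivAt φ 0 s := fun s hs => by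
    have hd : HasDerivAt φ (μ * (c - X s) * Real.exp (μ * s) +
        (X s - c) * (Real.exp (μ * s) * (μ * 1))) s :=
      ((h.hasDerivAt (continuousOn_const.mul (continuousOn_const.sub hXc)) hs.1).sub_const
        c).mul ((hasDerivAt_id s).const_mul μ).exp
    exact hd.congr_deriv (by ring)
  obtain ⟨ξ, -, hξ⟩ := exists_hasDerivAt_eq_slope φ (fun _ => 0) ht
    (((hXc.sub continuousOn_const).mul (by fun_prop)).mono fun s hs => hs.1) hφ
  have hφt : φ t = 0 := by
    have : φ 0 = 0 := by simp [φ, hX0]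
    rw [sub_zero, eq_div_iff ht.ne', zero_mul, eq_comm, sub_eq_zero, this] at hξ
    exact hξ
  have := (mul_eq_zero.1 hφt).resolve_right (Real.exp_pos _).ne'
  linarith

end Flux

section VariationOfConstants

def variationOfConstants (h q : ℝ → ℝ) (x₀ c t : ℝ) : ℝ :=
  x₀ * Real.exp (-(∫ s in (0:ℝ)..t, h s)) +
    c * ∫ s in (0:ℝ)..t, q s * Real.exp (-(∫ τ in s..t, h τ))

variable {h h' q q' : ℝ → ℝ} {x₀ c t : ℝ}

theorem variationOfConstants_congr (hh : EqOn h h' (Icc 0 t)) (hq : EqOn q q' (Icc 0 t))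
    (ht : 0 ≤ t) : variationOfConstants h q x₀ c t = variationOfConstants h' q' x₀ c t := by
  have hh' : ∀ s ∈ uIcc 0 t, EqOn h h' (uIcc s t) := fun s hs τ hτ => by
    rw [uIcc_of_le ht] at hs
    rw [uIcc_of_le hs.2] at hτ
    exact hh ⟨hs.1.trans hτ.1, hτ.2⟩
  rw [← uIcc_of_le ht] at hh hq
  unfold variationOfConstants
  rw [intervalIntegral.integral_congr hh]
  congr 2
  exact intervalIntegral.integral_congr fun s hs => by
    simp only [hq hs, intervalIntegral.integral_congr (hh' s hs)]

theorem variationOfConstants_eq_mul (hh : Continuous h) (x₀ c t : ℝ) :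
    variationOfConstants h q x₀ c t = Real.exp (-(∫ s in (0:ℝ)..t, h s)) *
      (x₀ + c * ∫ s in (0:ℝ)..t, q s * Real.exp (∫ τ in (0:ℝ)..s, h τ)) := by
  have hsplit : ∀ s,
      ∫ τ in s..t, h τ = (∫ τ in (0:ℝ)..t, h τ) - ∫ τ in (0:ℝ)..s, h τ :=
    fun s => (integral_interval_sub_left (hh.intervalIntegrable _ _)
      (hh.intervalIntegrable _ _)).symm
  have hpt : ∀ s, q s * Real.exp (-(∫ τ in s..t, h τ)) =
      Real.exp (-(∫ τ in (0:ℝ)..t, h τ)) * (q s * Real.exp (∫ τ in (0:ℝ)..s, h τ)) := by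
    intro s
    rw [hsplit, neg_sub, Real.exp_sub, Real.exp_neg]
    ring
  simp_rw [variationOfConstants, hpt, intervalIntegral.integral_const_mul]
  ring

theorem hasDerivAt_variationOfConstants (hh : Continuous h) (hq : Continuous q) (x₀ c t : ℝ) :
    HasDerivAt (variationOfConstants h q x₀ c)
      (c * q t - h t * variationOfConstants h q x₀ c t) t := by
  have hH : ∀ s, HasDerivAt (fun t => ∫ τ in (0:ℝ)..t, h τ) (h s) s := fun s =>
    integral_hasDerivAt_right (hh.intervalIntegrable _ _)
      hh.stronglyMeasurable.stronglyMeasurableAtFilter hh.continuousAt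
  have hqH : Continuous fun s => q s * Real.exp (∫ τ in (0:ℝ)..s, h τ) :=
    hq.mul (Real.continuous_exp.comp (continuous_primitive (hh.intervalIntegrable) 0))
  have hI : HasDerivAt (fun t => ∫ s in (0:ℝ)..t, q s * Real.exp (∫ τ in (0:ℝ)..s, h τ))
      (q t * Real.exp (∫ τ in (0:ℝ)..t, h τ)) t :=
    integral_hasDerivAt_right (hqH.intervalIntegrable _ _)
      hqH.stronglyMeasurable.stronglyMeasurableAtFilter hqH.continuousAt
  have hd := (hH t).neg.exp.mul ((hI.const_mul c).const_add x₀)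
  have hcancel :
      Real.exp (-(∫ τ in (0:ℝ)..t, h τ)) * Real.exp (∫ τ in (0:ℝ)..t, h τ) = 1 := by
    rw [← Real.exp_add, neg_add_cancel, Real.exp_zero]
  rw [funext (variationOfConstants_eq_mul hh x₀ c)]
  refine hd.congr_deriv ?_
  simp only [Pi.neg_apply]
  linear_combination c * q t * hcancel

theorem hasFlux_variationOfConstants (hh : Continuous h) (hq : Continuous q) (x₀ c : ℝ) :
    HasFlux (variationOfConstants h q x₀ c) x₀
      (fun u => c * q u - h u * variationOfConstants h q x₀ c u) := by
  have hd := hasDerivAt_variationOfConstants hh hq x₀ c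
  have hcont : Continuous (variationOfConstants h q x₀ c) :=
    continuous_iff_continuousAt.2 fun t => (hd t).continuousAt
  simpa [variationOfConstants] using HasFlux.of_hasDerivWithinAt
    (fun t _ => (hd t).hasDerivWithinAt)
    fun T _ => ((hq.const_smul c).sub (hh.mul hcont)).intervalIntegrable 0 T

end VariationOfConstants

section SusceptibleVaccinated

variable {μ N0 p ζ ε S0 V0 : ℝ} {b b' : ℝ → ℝ}

theorem Ssol_eq_variationOfConstants :
    Ssol μ N0 p S0 b = variationOfConstants (fun s => p + b s + μ) (fun _ => 1) S0 (μ * N0) := by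
  ext t; simp [Ssol, variationOfConstants]

theorem Ssol_congr (hb : EqOn b b' (Ici 0)) :
    EqOn (Ssol μ N0 p S0 b) (Ssol μ N0 p S0 b') (Ici 0) := fun t ht => by
  rw [Ssol_eq_variationOfConstants, Ssol_eq_variationOfConstants]
  exact variationOfConstants_congr (fun s hs => by simp only [hb hs.1]) (fun _ _ => rfl) ht

theorem Vsol_congr (hb : EqOn b b' (Ici 0)) :
    EqOn (Vsol μ N0 p ζ ε S0 V0 b) (Vsol μ N0 p ζ ε S0 V0 b') (Ici 0) := fun t ht =>
  variationOfConstants_congr (fun s hs => by simp only [hb hs.1])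
    (fun s hs => Ssol_congr hb hs.1) ht

theorem exists_continuous_eqOn_Ici (hb : ContinuousOn b (Ici 0)) :
    ∃ b' : ℝ → ℝ, Continuous b' ∧ EqOn b b' (Ici 0) :=
  ⟨fun s => b (max s 0), hb.comp_continuous (continuous_id.max continuous_const)
    fun s => le_max_right s 0, fun s hs => by simp only [max_eq_left hs.out]⟩

theorem hasFlux_Ssol (μ N0 p S0 : ℝ) (hb : ContinuousOn b (Ici 0)) :
    HasFlux (Ssol μ N0 p S0 b) S0 fun u => μ * N0 - (p + b u + μ) * Ssol μ N0 p S0 b u := by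
  obtain ⟨b', hb'c, hbb'⟩ := exists_continuous_eqOn_Ici hb
  have hSS : EqOn (variationOfConstants (fun s => p + b' s + μ) (fun _ => 1) S0 (μ * N0))
      (Ssol μ N0 p S0 b) (Ici 0) := by
    rw [← Ssol_eq_variationOfConstants]
    exact (Ssol_congr hbb').symm
  refine (hasFlux_variationOfConstants (h := fun s => p + b' s + μ) (by fun_prop)
    continuous_const S0 (μ * N0)).congr hSS fun u hu => ?_
  simp only [mul_one, hbb' hu, ← hSS hu]

theorem hasFlux_Vsol (μ N0 p ζ ε S0 V0 : ℝ) (hb : ContinuousOn b (Ici 0)) :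
    HasFlux (Vsol μ N0 p ζ ε S0 V0 b) V0 fun u =>
      p * Ssol μ N0 p S0 b u - (ζ * ε + b u * (1 - ε) + μ) * Vsol μ N0 p ζ ε S0 V0 b u := by
  obtain ⟨b', hb'c, hbb'⟩ := exists_continuous_eqOn_Ici hb
  have hSc : Continuous (Ssol μ N0 p S0 b') := by
    rw [Ssol_eq_variationOfConstants]
    exact continuous_iff_continuousAt.2 fun t =>
      (hasDerivAt_variationOfConstants (by fun_prop) continuous_const _ _ t).continuousAt
  have hVV := Vsol_congr (μ := μ) (N0 := N0) (p := p) (ζ := ζ) (ε := ε) (S0 := S0) (V0 := V0)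
    hbb'
  refine (hasFlux_variationOfConstants (by fun_prop) hSc V0 p).congr hVV.symm fun u hu => ?_
  simp only [hbb' hu, Ssol_congr hbb' hu, hVV hu]
  rfl

end SusceptibleVaccinated

section DensityFlux

variable {m w w₁ w₂ f0 g : ℝ → ℝ} {μ : ℝ}

theorem hasFlux_integral_dens (hm : CoeffBM m) (hf0 : IntegrableOn f0 (Ioi 0))
    (hg : ContinuousOn g (Ici 0)) :
    HasFlux (fun t => ∫ θ in Ioi 0, dens (survival m) f0 g t θ) (∫ θ in Ioi 0, f0 θ)
      fun u => g u - ∫ θ in Ioi 0, m θ * dens (survival m) f0 g u θ := fun T hT =>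
  ⟨((hg.mono fun s hs => by rw [uIcc_of_le hT] at hs; exact hs.1).intervalIntegrable).sub
    (intervalIntegrable_integral_mul_dens hm hm hf0 hg hT), integral_dens_eq hm hf0 hg hT⟩

theorem hasFlux_integral_dens_of_rate_eq (hw : CoeffBM w) (hμ : 0 ≤ μ)
    (hm : ∀ θ, m θ = w θ + μ) (hf0 : IntegrableOn f0 (Ioi 0)) (hg : ContinuousOn g (Ici 0)) :
    HasFlux (fun t => ∫ θ in Ioi 0, dens (survival m) f0 g t θ) (∫ θ in Ioi 0, f0 θ)
      fun u => g u - (∫ θ in Ioi 0, w θ * dens (survival m) f0 g u θ) -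
        μ * ∫ θ in Ioi 0, dens (survival m) f0 g u θ := by
  obtain rfl : m = fun θ => w θ + μ := funext hm
  have hm' := hw.add (CoeffBM.const hμ)
  refine (hasFlux_integral_dens hm' hf0 hg).congr (fun _ _ => rfl) fun u hu => ?_
  simp only [add_mul]
  rw [integral_add (integrableOn_mul_dens hm' hw hf0 hg hu)
    (integrableOn_mul_dens hm' (CoeffBM.const hμ) hf0 hg hu), MeasureTheory.integral_const_mul]
  ring

theorem hasFlux_integral_dens_of_rate_eq₂ (hw₁ : CoeffBM w₁) (hw₂ : CoeffBM w₂)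
    (hμ : 0 ≤ μ) (hm : ∀ θ, m θ = w₁ θ + w₂ θ + μ) (hf0 : IntegrableOn f0 (Ioi 0))
    (hg : ContinuousOn g (Ici 0)) :
    HasFlux (fun t => ∫ θ in Ioi 0, dens (survival m) f0 g t θ) (∫ θ in Ioi 0, f0 θ)
      fun u => g u - (∫ θ in Ioi 0, w₁ θ * dens (survival m) f0 g u θ) -
        (∫ θ in Ioi 0, w₂ θ * dens (survival m) f0 g u θ) -
        μ * ∫ θ in Ioi 0, dens (survival m) f0 g u θ := by
  have hm' : CoeffBM m := by
    rw [funext hm]; exact (hw₁.add hw₂).add (CoeffBM.const hμ)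
  refine (hasFlux_integral_dens_of_rate_eq (hw₁.add hw₂) hμ hm hf0 hg).congr
    (fun _ _ => rfl) fun u hu => ?_
  simp only [add_mul]
  rw [integral_add (integrableOn_mul_dens hm' hw₁ hf0 hg hu)
    (integrableOn_mul_dens hm' hw₂ hf0 hg hu)]
  ring

end DensityFlux

section Model

variable {μ N0 p ζ ε S0 V0 : ℝ} {βA βI k χ γA γI q ξ e0 a0 i0 β α ι : ℝ → ℝ}

theorem piE_eq_survival : piE μ k = survival fun τ => k τ + μ := rfl

theorem piA_eq_survival :
    piA μ γA ξ χ = survival fun τ => γA τ * ξ τ + χ τ * (1 - ξ τ) + μ := rfl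

theorem piI_eq_survival : piI μ γI = survival fun τ => γI τ + μ := rfl

theorem VolterraSystem.continuousOn_epsTilde
    (hsol : VolterraSystem μ N0 p ζ ε S0 V0 βA βI k χ γA γI q ξ e0 a0 i0 β α ι) :
    ContinuousOn (epsTilde μ N0 p ζ ε S0 V0 β) (Ici 0) :=
  hsol.1.mul ((hasFlux_Ssol μ N0 p S0 hsol.1).continuousOn.add
    (continuousOn_const.mul (hasFlux_Vsol μ N0 p ζ ε S0 V0 hsol.1).continuousOn))

theorem VolterraSystem.alpha_eq
    (hsol : VolterraSystem μ N0 p ζ ε S0 V0 βA βI k χ γA γI q ξ e0 a0 i0 β α ι)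
    (hμ : 0 ≤ μ) (hk : CoeffBM k) (hq : FracBM q) (he0 : IntegrableOn e0 (Ioi 0))
    {u : ℝ} (hu : 0 ≤ u) :
    α u = ∫ θ in Ioi 0,
      k θ * q θ * dens (piE μ k) e0 (epsTilde μ N0 p ζ ε S0 V0 β) u θ := by
  rw [(hsol.2.2.2 u hu).2.1, piE_eq_survival, integral_mul_dens (hk.add (CoeffBM.const hμ))
    (hk.mul hq.coeffBM) he0 hsol.continuousOn_epsTilde hu, add_comm]
  congr 1
  · exact setIntegral_congr_fun measurableSet_Ioi fun s _ => by ring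
  · exact intervalIntegral.integral_congr fun s _ => by simp only [epsTilde]; ring

theorem VolterraSystem.iota_eq
    (hsol : VolterraSystem μ N0 p ζ ε S0 V0 βA βI k χ γA γI q ξ e0 a0 i0 β α ι)
    (hμ : 0 ≤ μ) (hk : CoeffBM k) (hχ : CoeffBM χ) (hγA : CoeffBM γA) (hq : FracBM q)
    (hξ : FracBM ξ) (he0 : IntegrableOn e0 (Ioi 0)) (ha0 : IntegrableOn a0 (Ioi 0))
    {u : ℝ} (hu : 0 ≤ u) :
    ι u = (∫ θ in Ioi 0,
        k θ * (1 - q θ) * dens (piE μ k) e0 (epsTilde μ N0 p ζ ε S0 V0 β) u θ) +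
      ∫ θ in Ioi 0, χ θ * (1 - ξ θ) * dens (piA μ γA ξ χ) a0 α u θ := by
  have hmE := hk.add (CoeffBM.const hμ)
  have hmA := ((hγA.mul hξ.coeffBM).add (hχ.mul hξ.one_sub.coeffBM)).add (CoeffBM.const hμ)
  have hwE := hk.mul hq.one_sub.coeffBM
  have hwA := hχ.mul hξ.one_sub.coeffBM
  rw [(hsol.2.2.2 u hu).2.2, piE_eq_survival, piA_eq_survival,
    integral_mul_dens hmE hwE he0 hsol.continuousOn_epsTilde hu,
    integral_mul_dens hmA hwA ha0 hsol.2.1 hu, add_add_add_comm,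
    ← integral_add (integrableOn_shift_mul hmE hwE he0 hu)
      (integrableOn_shift_mul hmA hwA ha0 hu),
    ← intervalIntegral.integral_add
      (intervalIntegrable_conv_mul hmE hwE hsol.continuousOn_epsTilde hu)
      (intervalIntegrable_conv_mul hmA hwA hsol.2.1 hu), add_comm]
  congr 1
  · exact setIntegral_congr_fun measurableSet_Ioi fun s _ => by ring
  · exact intervalIntegral.integral_congr fun s _ => by simp only [epsTilde]; ring

theorem VolterraSystem.hasFlux_recovered
    (hsol : VolterraSystem μ N0 p ζ ε S0 V0 βA βI k χ γA γI q ξ e0 a0 i0 β α ι)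
    (hμ : 0 ≤ μ) (hχ : CoeffBM χ) (hγA : CoeffBM γA) (hγI : CoeffBM γI) (hξ : FracBM ξ)
    (ha0 : IntegrableOn a0 (Ioi 0)) (hi0 : IntegrableOn i0 (Ioi 0)) {R : ℝ → ℝ} {Rinit : ℝ}
    (hR0 : R 0 = Rinit)
    (hR' : ∀ t, 0 ≤ t → HasDerivWithinAt R
      (ζ * ε * Vsol μ N0 p ζ ε S0 V0 β t + (∫ θ in Ioi 0, (γA θ * ξ θ *
        dens (piA μ γA ξ χ) a0 α t θ + γI θ * dens (piI μ γI) i0 ι t θ)) - μ * R t)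
      (Ici 0) t) :
    HasFlux R Rinit fun u => ζ * ε * Vsol μ N0 p ζ ε S0 V0 β u +
      (∫ θ in Ioi 0, γA θ * ξ θ * dens (piA μ γA ξ χ) a0 α u θ) +
      (∫ θ in Ioi 0, γI θ * dens (piI μ γI) i0 ι u θ) - μ * R u := by
  have hmA := ((hγA.mul hξ.coeffBM).add (hχ.mul hξ.one_sub.coeffBM)).add (CoeffBM.const hμ)
  have hmI := hγI.add (CoeffBM.const hμ)
  have hwA := hγA.mul hξ.coeffBM
  have hRc : ContinuousOn R (Ici 0) := fun t ht => (hR' t ht).continuousWithinAt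
  have hVc := (hasFlux_Vsol μ N0 p ζ ε S0 V0 hsol.1).continuousOn
  rw [← hR0]
  refine HasFlux.of_hasDerivWithinAt (fun t ht => (hR' t ht).congr_deriv ?_) fun T hT => ?_
  · rw [piA_eq_survival, piI_eq_survival, integral_add
      (integrableOn_mul_dens hmA hwA ha0 hsol.2.1 ht)
      (integrableOn_mul_dens hmI hγI hi0 hsol.2.2.1 ht)]
    ring
  · have hIcc : uIcc 0 T ⊆ Ici 0 := fun s hs => by rw [uIcc_of_le hT] at hs; exact hs.1
    exact ((((hVc.mono hIcc).intervalIntegrable.const_mul _).add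
      (intervalIntegrable_integral_mul_dens hmA hwA ha0 hsol.2.1 hT)).add
      (intervalIntegrable_integral_mul_dens hmI hγI hi0 hsol.2.2.1 hT)).sub
      ((hRc.mono hIcc).intervalIntegrable.const_mul _)

end Model

theorem total_population_constant_general
    (μ N0 p ζ ε S0 V0 : ℝ) (βA βI k χ γA γI q ξ e0 a0 i0 : ℝ → ℝ)
    (hμ : 0 < μ)
    (hk : CoeffBM k) (hχ : CoeffBM χ)
    (hγA : CoeffBM γA) (hγI : CoeffBM γI) (hq : FracBM q) (hξ : FracBM ξ)
    (he0 : IntegrableOn e0 (Set.Ioi 0)) (ha0 : IntegrableOn a0 (Set.Ioi 0))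
    (hi0 : IntegrableOn i0 (Set.Ioi 0))
    (β α ι : ℝ → ℝ)
    (hsol : VolterraSystem μ N0 p ζ ε S0 V0 βA βI k χ γA γI q ξ e0 a0 i0 β α ι)
    (S V : ℝ → ℝ) (e a i : ℝ → ℝ → ℝ)
    (hS : S = Ssol μ N0 p S0 β)
    (hV : V = Vsol μ N0 p ζ ε S0 V0 β)
    (he : e = dens (piE μ k) e0 (epsTilde μ N0 p ζ ε S0 V0 β))
    (ha : a = dens (piA μ γA ξ χ) a0 α)
    (hi : i = dens (piI μ γI) i0 ι)
    -- R is the unique C¹ solution of the recovered-compartment ODE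
    (R : ℝ → ℝ) (Rinit : ℝ) (hR0 : R 0 = Rinit)
    (hR' : ∀ t, 0 ≤ t → HasDerivWithinAt R
      (ζ * ε * V t +
          (∫ θ in Set.Ioi (0:ℝ), (γA θ * ξ θ * a t θ + γI θ * i t θ)) - μ * R t)
      (Set.Ici 0) t)
    (hN0eq : N0 = S0 + V0 + (∫ θ in Set.Ioi (0:ℝ), e0 θ) + (∫ θ in Set.Ioi (0:ℝ), a0 θ) +
      (∫ θ in Set.Ioi (0:ℝ), i0 θ) + Rinit) :
    ∀ t, 0 ≤ t →
      S t + V t + (∫ θ in Set.Ioi (0:ℝ), e t θ) + (∫ θ in Set.Ioi (0:ℝ), a t θ) +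
        (∫ θ in Set.Ioi (0:ℝ), i t θ) + R t = N0 := by
  subst hS hV he ha hi
  have hE := hasFlux_integral_dens_of_rate_eq₂ (m := fun τ => k τ + μ) (hk.mul hq.coeffBM)
    (hk.mul hq.one_sub.coeffBM) hμ.le (fun θ => by ring) he0 hsol.continuousOn_epsTilde
  have hA := hasFlux_integral_dens_of_rate_eq₂
    (m := fun τ => γA τ * ξ τ + χ τ * (1 - ξ τ) + μ) (hγA.mul hξ.coeffBM)
    (hχ.mul hξ.one_sub.coeffBM) hμ.le (fun θ => rfl) ha0 hsol.2.1
  have hI := hasFlux_integral_dens_of_rate_eq (m := fun τ => γI τ + μ) hγI hμ.le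
    (fun θ => rfl) hi0 hsol.2.2.1
  have hN := (((((hasFlux_Ssol μ N0 p S0 hsol.1).add (hasFlux_Vsol μ N0 p ζ ε S0 V0 hsol.1)).add
    hE).add hA).add hI).add (hsol.hasFlux_recovered hμ.le hχ hγA hγI hξ ha0 hi0 hR0 hR')
  rw [← hN0eq] at hN
  refine (hN.congr (fun _ _ => rfl) fun u hu => ?_).eq_of_flux_eq_mul_sub (μ := μ)
  simp only [hsol.alpha_eq hμ.le hk hq he0 hu, hsol.iota_eq hμ.le hk hχ hγA hq hξ he0 ha0 hu,
    piE_eq_survival, piA_eq_survival, piI_eq_survival, epsTilde]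
  ring

/-- Conservation of the total population: if
`N0 = S0 + V0 + ∫e0 + ∫a0 + ∫i0 + R_init`, then
`N(t) = S(t) + V(t) + ∫e(t,·) + ∫a(t,·) + ∫i(t,·) + R(t) = N0` for all `t ≥ 0`. -/
theorem total_population_constant
    (μ N0 p ζ ε S0 V0 : ℝ) (βA βI k χ γA γI q ξ e0 a0 i0 : ℝ → ℝ)
    (hμ : 0 < μ) (hN0 : 0 ≤ N0) (hp : 0 ≤ p) (hζ : 0 ≤ ζ) (hε : ε ∈ Set.Icc (0:ℝ) 1)
    (hβA : CoeffBM βA) (hβI : CoeffBM βI) (hk : CoeffBM k) (hχ : CoeffBM χ)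
    (hγA : CoeffBM γA) (hγI : CoeffBM γI) (hq : FracBM q) (hξ : FracBM ξ)
    (he0 : IntegrableOn e0 (Set.Ioi 0)) (ha0 : IntegrableOn a0 (Set.Ioi 0))
    (hi0 : IntegrableOn i0 (Set.Ioi 0))
    (hS0 : 0 ≤ S0) (hV0 : 0 ≤ V0)
    (he0nn : 0 ≤ᵐ[volume.restrict (Set.Ioi (0:ℝ))] e0)
    (ha0nn : 0 ≤ᵐ[volume.restrict (Set.Ioi (0:ℝ))] a0)
    (hi0nn : 0 ≤ᵐ[volume.restrict (Set.Ioi (0:ℝ))] i0)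
    (β α ι : ℝ → ℝ)
    (hsol : VolterraSystem μ N0 p ζ ε S0 V0 βA βI k χ γA γI q ξ e0 a0 i0 β α ι)
    (S V : ℝ → ℝ) (e a i : ℝ → ℝ → ℝ)
    (hS : S = Ssol μ N0 p S0 β)
    (hV : V = Vsol μ N0 p ζ ε S0 V0 β)
    (he : e = dens (piE μ k) e0 (epsTilde μ N0 p ζ ε S0 V0 β))
    (ha : a = dens (piA μ γA ξ χ) a0 α)
    (hi : i = dens (piI μ γI) i0 ι)
    -- R is the unique C¹ solution of the recovered-compartment ODE
    (R : ℝ → ℝ) (Rinit : ℝ) (hRinit : 0 ≤ Rinit) (hR0 : R 0 = Rinit)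
    (hR' : ∀ t, 0 ≤ t → HasDerivWithinAt R
      (ζ * ε * V t +
          (∫ θ in Set.Ioi (0:ℝ), (γA θ * ξ θ * a t θ + γI θ * i t θ)) - μ * R t)
      (Set.Ici 0) t)
    (hN0eq : N0 = S0 + V0 + (∫ θ in Set.Ioi (0:ℝ), e0 θ) + (∫ θ in Set.Ioi (0:ℝ), a0 θ) +
      (∫ θ in Set.Ioi (0:ℝ), i0 θ) + Rinit) :
    ∀ t, 0 ≤ t →
      S t + V t + (∫ θ in Set.Ioi (0:ℝ), e t θ) + (∫ θ in Set.Ioi (0:ℝ), a t θ) +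
        (∫ θ in Set.Ioi (0:ℝ), i t θ) + R t = N0 :=
  total_population_constant_general μ N0 p ζ ε S0 V0 βA βI k χ γA γI q ξ e0 a0 i0 hμ hk hχ hγA hγI
    hq hξ he0 ha0 hi0 β α ι hsol S V e a i hS hV he ha hi R Rinit hR0 hR' hN0eq
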